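/- arXiv:2102.12786 — 2 statements merged into one kernel-verified Lean document; each statement's English description precedes it below -/
import Mathlib

section
/- Let α be a type with decidable equality and next : α → Option α a pointer function. Every terminated chain of next from g is duplicate-free (i.e., it satisfies List.Nodup). Consequently, the traversal performed by a read operation never visits the same block twice. -/
/-- `L` is a terminated chain of the pointer function `next` starting from `g`:
`L` is nonempty, starts at `g`, each element points to the following one,
and the last element points to `none`. -/
def TerminatedChain {α : Type*} (next : α → Option α) (g : α) (L : List α) : Prop :=
  L ≠ [] ∧ L.head? = some g ∧
  List.Chain' (fun a b => next a = some b) L ∧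
  (∀ a ∈ L.getLast?, next a = none)

lemma getLast?_cons_ne {α : Type*} (a : α) {t : List α} (ht : t ≠ []) :
    (a :: t).getLast? = t.getLast? := by
  obtain ⟨b, t', rfl⟩ := List.exists_cons_of_ne_nil ht
  simp

lemma tc_tail {α : Type*} (next : α → Option α) {g a : α} {t : List α}
    (ht : t ≠ []) (h : TerminatedChain next g (a :: t)) :
    TerminatedChain next (t.head ht) t := by
  obtain ⟨-, -, hc, hlast⟩ := h
  refine ⟨ht, by simp [List.head?_eq_head ht], hc.tail, ?_⟩
  intro b hb
  apply hlast
  rwa [getLast?_cons_ne a ht]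

lemma tc_unique {α : Type*} (next : α → Option α) :
    ∀ (L₁ : List α) (L₂ : List α) (g : α),
      TerminatedChain next g L₁ → TerminatedChain next g L₂ → L₁ = L₂ := by
  intro L₁
  induction L₁ with
  | nil => intro L₂ g h₁ _; exact absurd rfl h₁.1
  | cons a t ih =>
    intro L₂ g h₁ h₂
    have ha : g = a := by simpa using h₁.2.1.symm
    obtain ⟨hne, hhead, hc, hlast⟩ := h₂
    obtain ⟨b, s, rfl⟩ := List.exists_cons_of_ne_nil hne
    have hb : a = b := by rw [ha] at hhead; simpa using hhead.symm
    rcases eq_or_ne t [] with rfl | ht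
    · have hnone : next a = none := h₁.2.2.2 a (by simp)
      rcases eq_or_ne s [] with rfl | hs
      · rw [hb]
      · obtain ⟨c, s', rfl⟩ := List.exists_cons_of_ne_nil hs
        have : next b = some c := hc.rel_head
        rw [← hb, hnone] at this
        simp at this
    · obtain ⟨c, t', rfl⟩ := List.exists_cons_of_ne_nil ht
      have hnc : next a = some c := h₁.2.2.1.rel_head
      rcases eq_or_ne s [] with rfl | hs
      · have : next b = none := hlast b (by simp)
        rw [← hb, hnc] at this
        simp at this
      · obtain ⟨d, s', rfl⟩ := List.exists_cons_of_ne_nil hs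
        have hnd : next b = some d := hc.rel_head
        rw [← hb, hnc] at hnd
        have hdc : d = c := by injection hnd.symm
        subst hdc
        have key := ih (d :: s') d (by simpa using tc_tail next (by simp) h₁)
          (by simpa using tc_tail next (t := d :: s') (by simp) ⟨hne, hhead, hc, hlast⟩)
        rw [hb, key]

lemma tc_suffix {α : Type*} (next : α → Option α) {g b : α} {u v : List α}
    (h : TerminatedChain next g (u ++ b :: v)) :
    TerminatedChain next b (b :: v) := by
  obtain ⟨-, -, hc, hlast⟩ := h
  refine ⟨by simp, by simp, hc.suffix ⟨u, rfl⟩, ?_⟩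
  intro a ha
  apply hlast
  rw [List.getLast?_append, Option.mem_def.mp ha]
  simp

/-- Every terminated chain is duplicate-free: a read traversal never visits
the same block twice. -/
theorem terminatedChain_nodup {α : Type*} [DecidableEq α]
    (next : α → Option α) (g : α) (L : List α)
    (hL : TerminatedChain next g L) :
    L.Nodup := by
  induction L generalizing g with
  | nil => simp
  | cons a t ih =>
    refine List.nodup_cons.mpr ⟨?_, ?_⟩
    · intro hmem
      obtain ⟨t₁, t₂, rfl⟩ := List.append_of_mem hmem
      have h2 : TerminatedChain next a (a :: t₂) :=
        tc_suffix next (u := a :: t₁) (by simpa using hL)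
      have ha : g = a := by simpa using hL.2.1.symm
      rw [ha] at hL
      have := tc_unique next (a :: (t₁ ++ a :: t₂)) (a :: t₂) a hL h2
      have hlen := congrArg List.length this
      simp at hlen
      omega
    · rcases eq_or_ne t [] with rfl | ht
      · simp
      · exact ih _ (tc_tail next ht hL)
end

section
/- Let α be a type with decidable equality, next : α → Option α, and g : α. Suppose L = P ++ [b] ++ Q is a terminated chain of next from g, and let C = [c₁, …, c_k] be a nonempty duplicate-free list of fresh blocks, disjoint from L. Define the updated pointer function next' by: next' cⱼ = some cⱼ₊₁ for 1 ≤ j < k, next' c_k = next b, next' b = some c₁, and next' x = next x for every x not in C ∪ {b}. Then P ++ [b] ++ C ++ Q is a terminated chain of next' from g. That is, after performing the pointer updates of a successful update operation (creating the new blocks in reverse order and finally redirecting b to c₁), a read traversal returns exactly the original list with the new segment C spliced in immediately after b. -/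
/-! A terminated chain is determined by its starting block, so no block occurs twice in it: a
repeated block would start two terminated chains of different lengths. Hence `b` occurs once,
`next'` agrees with `next` on `P` and `Q`, and the new list is glued from three pieces: the old
chain `P ++ [b]`, the new chain `b :: C`, and the terminated chain `c_k :: Q`, which `c_k` starts
because it points where `b` used to. -/

section

open List

variable {α : Type*} {next next' : α → Option α} {g x : α} {L : List α}

-- `TerminatedChain` unfolded, with `IsChain` in place of the deprecated `List.Chain'`.
theorem terminatedChain_iff :
    TerminatedChain next g L ↔ L ≠ [] ∧ L.head? = some g ∧
      IsChain (fun a b => next a = some b) L ∧ ∀ a ∈ L.getLast?, next a = none :=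
  Iff.rfl

theorem TerminatedChain.exists_eq_cons (h : TerminatedChain next g L) : ∃ t, L = g :: t := by
  obtain ⟨hne, hhead, -⟩ := h
  obtain ⟨a, t, rfl⟩ := exists_cons_of_ne_nil hne
  exact ⟨t, by simpa using hhead⟩

theorem terminatedChain_cons_iff {t : List α} :
    TerminatedChain next x (x :: t) ↔
      next x = t.head? ∧ ∀ y ∈ t.head?, TerminatedChain next y t := by
  cases t with
  | nil => simp [terminatedChain_iff]
  | cons y t => simp [terminatedChain_iff, getLast?_cons_cons, and_assoc]

theorem TerminatedChain.unique {L₁ L₂ : List α} (h₁ : TerminatedChain next g L₁)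
    (h₂ : TerminatedChain next g L₂) : L₁ = L₂ := by
  obtain ⟨t₁, rfl⟩ := h₁.exists_eq_cons
  obtain ⟨t₂, rfl⟩ := h₂.exists_eq_cons
  induction t₁ generalizing g t₂ with
  | nil =>
    have hnext := (terminatedChain_cons_iff.1 h₁).1.symm.trans (terminatedChain_cons_iff.1 h₂).1
    simpa [eq_comm] using hnext
  | cons y t₁ ih =>
    have hnext := (terminatedChain_cons_iff.1 h₁).1.symm.trans (terminatedChain_cons_iff.1 h₂).1
    cases t₂ with
    | nil => simp at hnext
    | cons y' t₂ =>
      obtain rfl : y = y' := by simpa using hnext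
      have h₁' := (terminatedChain_cons_iff.1 h₁).2 y rfl
      have h₂' := (terminatedChain_cons_iff.1 h₂).2 y rfl
      rw [ih h₁' t₂ h₂']

theorem terminatedChain_append_cons_iff {u v : List α} :
    TerminatedChain next g (u ++ x :: v) ↔ (u ++ [x]).head? = some g ∧
      IsChain (fun a b => next a = some b) (u ++ [x]) ∧ TerminatedChain next x (x :: v) := by
  rw [terminatedChain_iff, terminatedChain_iff, isChain_split, getLast?_append_cons]
  simp [and_assoc]

theorem TerminatedChain.nodup (h : TerminatedChain next g L) : L.Nodup := by
  obtain ⟨t, rfl⟩ := h.exists_eq_cons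
  induction t generalizing g with
  | nil => exact nodup_singleton g
  | cons y t ih =>
    refine nodup_cons.2 ⟨fun hg => ?_, ih ((terminatedChain_cons_iff.1 h).2 y rfl)⟩
    obtain ⟨u, w, hsplit⟩ := append_of_mem hg
    have hsuffix : TerminatedChain next g (g :: w) :=
      (terminatedChain_append_cons_iff (u := g :: u).1 (by rwa [cons_append, ← hsplit])).2.2
    have hlen := congrArg length (h.unique hsuffix)
    simp [hsplit] at hlen
    omega

theorem TerminatedChain.congr (hL : ∀ a ∈ L, next' a = next a) (h : TerminatedChain next g L) :
    TerminatedChain next' g L := by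
  obtain ⟨hne, hhead, hchain, hlast⟩ := h
  refine ⟨hne, hhead, hchain.imp_of_mem_imp fun a b ha _ hab => (hL a ha).trans hab, ?_⟩
  intro a ha
  rw [hL a (mem_of_mem_getLast? ha)]
  exact hlast a ha

theorem isChain_append_singleton_imp_of_mem {R S : α → α → Prop} {u : List α}
    (H : ∀ a b, a ∈ u → R a b → S a b) (h : IsChain R (u ++ [x])) :
    IsChain S (u ++ [x]) := by
  rw [isChain_append] at h ⊢
  obtain ⟨hu, -, hjoin⟩ := h
  exact ⟨hu.imp_of_mem_imp fun a b ha _ => H a b ha, .singleton x,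
    fun a ha b hb => H a b (mem_of_mem_getLast? ha) (hjoin a ha b hb)⟩

theorem TerminatedChain.replace_head {b : α} {Q : List α} (h : TerminatedChain next b (b :: Q))
    (hx : next' x = next b) (hQ : ∀ a ∈ Q, next' a = next a) :
    TerminatedChain next' x (x :: Q) := by
  obtain ⟨hb, hQchain⟩ := terminatedChain_cons_iff.1 h
  exact terminatedChain_cons_iff.2 ⟨hx.trans hb, fun y hy => (hQchain y hy).congr hQ⟩

end

theorem terminatedChain_splice_general {α : Type*}
    (next next' : α → Option α) (g b : α) (P Q C : List α)
    (hL : TerminatedChain next g (P ++ [b] ++ Q))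
    (hCne : C ≠ [])
    (hdisj : ∀ x ∈ C, x ∉ P ++ [b] ++ Q)
    -- `next' cⱼ = some cⱼ₊₁` for consecutive elements of `C`
    (hC : List.Chain' (fun a c => next' a = some c) C)
    -- `next' c_k = next b` for the last element of `C`
    (hlast : ∀ a ∈ C.getLast?, next' a = next b)
    -- `next' b = some c₁` for the head of `C`
    (hb : ∀ c ∈ C.head?, next' b = some c)
    -- `next'` agrees with `next` outside `C ∪ {b}`
    (hrest : ∀ x, x ∉ C → x ≠ b → next' x = next x) :
    TerminatedChain next' g (P ++ [b] ++ C ++ Q) := by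
  rw [List.append_assoc, List.singleton_append] at hL hdisj
  have hbPQ : b ∉ P ++ Q := (List.nodup_cons.1 (List.nodup_middle.1 hL.nodup)).1
  have hagree : ∀ a ∈ P ++ Q, next' a = next a := fun a ha =>
    hrest a
      (fun haC => hdisj a haC (by simp only [List.mem_append, List.mem_cons] at ha ⊢; tauto))
      (by rintro rfl; exact hbPQ ha)
  obtain ⟨hhead, hPb, hbQ⟩ := terminatedChain_append_cons_iff.1 hL
  obtain ⟨C₀, c, rfl⟩ : ∃ C₀ c, C = C₀ ++ [c] :=
    ⟨_, _, (List.dropLast_append_getLast hCne).symm⟩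
  rw [show P ++ [b] ++ (C₀ ++ [c]) ++ Q = (P ++ b :: C₀) ++ c :: Q by simp]
  refine terminatedChain_append_cons_iff.2 ⟨by simpa using hhead, ?_,
    hbQ.replace_head (hlast c (by simp)) fun a ha => hagree a (List.mem_append_right P ha)⟩
  rw [List.append_assoc, List.cons_append, List.isChain_split]
  exact ⟨isChain_append_singleton_imp_of_mem
      (fun a _ ha => (hagree a (List.mem_append_left Q ha)).trans) hPb,
    List.isChain_cons.2 ⟨hb, hC⟩⟩

/-- Splicing a fresh segment `C` immediately after block `b` of a terminated chain
(by creating the new blocks in reverse order and finally redirecting `b` to the head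
of `C`) yields a terminated chain of the updated pointer function. -/
theorem terminatedChain_splice {α : Type*} [DecidableEq α]
    (next next' : α → Option α) (g b : α) (P Q C : List α)
    (hL : TerminatedChain next g (P ++ [b] ++ Q))
    (hCne : C ≠ []) (hCnodup : C.Nodup)
    (hdisj : ∀ x ∈ C, x ∉ P ++ [b] ++ Q)
    -- `next' cⱼ = some cⱼ₊₁` for consecutive elements of `C`
    (hC : List.Chain' (fun a c => next' a = some c) C)
    -- `next' c_k = next b` for the last element of `C`
    (hlast : ∀ a ∈ C.getLast?, next' a = next b)
    -- `next' b = some c₁` for the head of `C`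
    (hb : ∀ c ∈ C.head?, next' b = some c)
    -- `next'` agrees with `next` outside `C ∪ {b}`
    (hrest : ∀ x, x ∉ C → x ≠ b → next' x = next x) :
    TerminatedChain next' g (P ++ [b] ++ C ++ Q) :=
  terminatedChain_splice_general next next' g b P Q C hL hCne hdisj hC hlast hb hrest
end
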